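/- For every real α and positive integer n, det(αA_n + (1−α)Â_n) = − Π_{γ ∈ Comp^B(n)} m_γ(α), where for a signed composition γ with part sizes γ₁,...,γ_k, m_γ(α) = 2^{k/2}·(αγ₁ + (1−α))·Π_{i=2}^{k} γ_i. -/

import Mathlib

open Finset

/-- The first sign (`true` = barred = `−`) appearing in a list of optional signs. -/
def firstSign (l : List (Option Bool)) : Bool :=
  (l.filterMap id).headI

/-- Whether the `some` entries of a list form a prefix (no `some` after a `none`). -/
def somesArePrefix (l : List (Option Bool)) : Bool :=
  (l.dropWhile fun o => o.isSome).all fun o => o.isNone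

/-- The weight `wt_γ(σ)` of a signed set `σ` (encoded as a word `l` over
`{0,1,*} = Option Bool`) with respect to a signed composition `γ`:
`wt_γ(σ) = 0` unless `S(σ)` is unimodal with respect to the underlying composition of
`γ` and the sign vector `ε̃` of `σ` is constant on each block of `γ`; otherwise
`wt_γ(σ) = (−1)^{|S(σ) \ S(γ)| + n_γ(σ)}`, where `n_γ(σ)` is the number of blocks on
which both `γ` and `σ` assign the negative sign. -/
def wt : List (ℕ × Bool) → List (Option Bool) → ℤ
  | [], l => if l.isEmpty then 1 else 0
  | (a, b) :: t, l =>
      let blk := l.take a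
      let inner := blk.take (a - 1)
      let sgn := firstSign l
      if somesArePrefix inner
          && ((List.range blk.length).all fun j => firstSign (l.drop j) == sgn) then
        (-1 : ℤ) ^ ((inner.filterMap id).length + (if b && sgn then 1 else 0))
          * wt t (l.drop a)
      else 0

/-- Decoding of a word over `{0,1,*}` (with last letter not `*`) into the signed
composition it encodes. -/
def compOfWord : List (Option Bool) → List (ℕ × Bool)
  | [] => []
  | none :: t =>
      match compOfWord t with
      | [] => []
      | (a, b) :: r => (a + 1, b) :: r
  | some b :: t => (1, b) :: compOfWord t

/-- The set `Σ^B(n+1)` of signed sets, encoded as words of length `n+1` over `{0,1,*}`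
whose last letter is not `*`. -/
def SignedSetWord (n : ℕ) : Type :=
  { w : Fin (n + 1) → Option Bool // w (Fin.last n) ≠ none }

noncomputable instance (n : ℕ) : Fintype (SignedSetWord n) := by
  unfold SignedSetWord; infer_instance

instance (n : ℕ) : DecidableEq (SignedSetWord n) := by
  unfold SignedSetWord; infer_instance

/-- The weight matrix `A_{n+1}`, with rows indexed by signed compositions of `n+1`
(encoded as words) and columns by signed sets in `Σ^B(n+1)`, whose `(γ, σ)` entry is
`wt_γ(σ)`. -/
def weightMatrix (n : ℕ) : Matrix (SignedSetWord n) (SignedSetWord n) ℤ :=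
  Matrix.of fun γ σ => wt (compOfWord (List.ofFn γ.1)) (List.ofFn σ.1)

/-- The length of the initial run of `*`-s in a word. -/
def starRun {n : ℕ} (w : SignedSetWord n) : ℕ :=
  ((List.ofFn w.1).takeWhile fun o => o.isNone).length

/-- The matrix `Â_{n+1}`, obtained from `A_{n+1}` by setting to zero all entries
`(γ, σ)` for which the initial `*`-run of the row word is longer than that of the
column word. -/
def weightMatrixHat (n : ℕ) : Matrix (SignedSetWord n) (SignedSetWord n) ℤ :=
  Matrix.of fun γ σ => if starRun σ < starRun γ then 0 else weightMatrix n γ σ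

/-- `A_{n+1}` as a real matrix. -/
noncomputable def weightMatrixR (n : ℕ) : Matrix (SignedSetWord n) (SignedSetWord n) ℝ :=
  Matrix.of fun γ σ => ((weightMatrix n γ σ : ℤ) : ℝ)

/-- `Â_{n+1}` as a real matrix. -/
noncomputable def weightMatrixHatR (n : ℕ) :
    Matrix (SignedSetWord n) (SignedSetWord n) ℝ :=
  Matrix.of fun γ σ => ((weightMatrixHat n γ σ : ℤ) : ℝ)

/-- The list of (absolute) part sizes of the signed composition encoded by the word `γ`. -/
def partSizes {n : ℕ} (γ : SignedSetWord n) : List ℕ :=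
  (compOfWord (List.ofFn γ.1)).map Prod.fst

/-!
Replace `(α, 1 - α)` by independent parameters `(a, c)` and split words by their first letter
(`*`, `0` or `1`). Then `a A_{n+1} + c Â_{n+1}` becomes a 3 × 3 block matrix with blocks
`(a + c) Â_n`, `±(a + c) A_n`, `-a A_n P_ε` and `(a + c) A_n (P₀ - P₁)`, where `P_ε` projects onto
the columns whose first sign is `ε`. One block column operation makes it block triangular:
`det (a A_{n+1} + c Â_{n+1}) = det (a A_n + (a + c) Â_n) · (a + c)^N det A_n · (-2(a + c))^N det A_n`
with `N = 2 · 3^(n-1)` even. The product `∏ m_γ` obeys the same recursion: a leading `*`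
lengthens the first part of `γ`, which turns `(a, c)` into `(a, a + c)`, while a leading sign adds
a first part of size `1`, contributing `√2 (a + c)` times `m_γ` at `(1, 0)`. For `n = 1` both
sides are `-2 (a + c)^2`.
-/

lemma List.all_take_iff_le_length_takeWhile {α : Type*} (p : α → Bool) :
    ∀ (l : List α) (k : ℕ), k ≤ l.length →
      ((l.take k).all p = true ↔ k ≤ (l.takeWhile p).length)
  | _, 0, _ => by simp
  | [], _ + 1, h => by simp at h
  | a :: l, k + 1, h => by
      cases ha : p a
      · simp [ha]
      · simp [ha, List.all_take_iff_le_length_takeWhile p l k (by simpa using h)]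

lemma List.all_range_add_one (k : ℕ) (f : ℕ → Bool) :
    (List.range (k + 1)).all f = (f 0 && (List.range k).all fun j => f (j + 1)) := by
  simp [List.range_succ_eq_map, Function.comp_def]

lemma Matrix.fromRows_add_fromRows {R m₁ m₂ n : Type*} [Add R] (A₁ B₁ : Matrix m₁ n R)
    (A₂ B₂ : Matrix m₂ n R) :
    Matrix.fromRows A₁ A₂ + Matrix.fromRows B₁ B₂ = Matrix.fromRows (A₁ + B₁) (A₂ + B₂) := by
  ext (i | i) j <;> rfl

open Matrix in
/-- Subtracting `E` times the second and `F` times the third block column from the first, and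
the second block column from the third, makes the matrix block upper triangular. -/
lemma Matrix.det_fromBlocks_of_isIdempotentElem {ι R : Type*} [Fintype ι] [DecidableEq ι]
    [CommRing R] (H B Q E F : Matrix ι ι R) (hE : IsIdempotentElem E)
    (hF : IsIdempotentElem F) (hEF : E + F = 1) :
    (fromBlocks H (fromCols (-(B * E)) (-(B * F))) (fromRows Q (Q * (E - F)))
        (fromBlocks Q Q Q (-Q))).det
      = (H + B).det * Q.det * ((-2 : R) • Q).det := by
  set K : Matrix (ι ⊕ ι) ι R := fromRows (-E) (-F)
  set L : Matrix (ι ⊕ ι) (ι ⊕ ι) R := fromBlocks 1 (-1) 0 1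
  have hV : (fromBlocks (1 : Matrix ι ι R) 0 K L).det = 1 := by
    simp [L, det_fromBlocks_zero₁₂]
  rw [← mul_one (det _), ← hV, ← det_mul, fromBlocks_multiply]
  simp only [Matrix.mul_one, Matrix.mul_zero, zero_add]
  rw [fromCols_mul_fromRows, fromBlocks_mul_fromRows, fromRows_add_fromRows, fromBlocks_multiply]
  have h₁₁ : H + (-(B * E) * -E + -(B * F) * -F) = H + B := by
    rw [neg_mul_neg, neg_mul_neg, mul_assoc, mul_assoc, hE.eq, hF.eq, ← mul_add, hEF, mul_one]
  have h₂₁ : fromRows (Q + (Q * -E + Q * -F)) (Q * (E - F) + (Q * -E + -Q * -F)) = 0 := by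
    rw [← fromRows_zero]
    congr 1
    · rw [mul_neg, mul_neg, ← neg_add, ← mul_add, hEF, mul_one, add_neg_cancel]
    · simp only [mul_neg, neg_mul, neg_neg, mul_sub]
      abel
  have h₂₂ : fromBlocks (Q * 1 + Q * 0) (Q * -1 + Q * 1) (Q * 1 + -Q * 0) (Q * -1 + -Q * 1)
      = fromBlocks Q 0 Q ((-2 : R) • Q) := by
    simp only [mul_one, mul_zero, add_zero, mul_neg, neg_add_cancel]
    congr 1
    rw [← neg_add, ← two_smul R Q, neg_smul]
  rw [h₁₁, h₂₁, h₂₂, det_fromBlocks_zero₂₁, det_fromBlocks_zero₁₂, mul_assoc]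

def leadingStars (l : List (Option Bool)) : ℕ :=
  (l.takeWhile fun o => o.isNone).length

section Words

variable (b : Bool) (l : List (Option Bool))

@[simp] lemma firstSign_cons_some : firstSign (some b :: l) = b := by
  simp [firstSign]

@[simp] lemma firstSign_cons_none : firstSign (none :: l) = firstSign l := by
  simp [firstSign]

@[simp] lemma somesArePrefix_nil : somesArePrefix [] = true := rfl

@[simp] lemma somesArePrefix_cons_some : somesArePrefix (some b :: l) = somesArePrefix l := by
  simp [somesArePrefix]

@[simp] lemma somesArePrefix_cons_none :
    somesArePrefix (none :: l) = l.all fun o => o.isNone := by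
  simp [somesArePrefix]

lemma somesArePrefix_of_all_isNone {l : List (Option Bool)}
    (h : (l.all fun o => o.isNone) = true) : somesArePrefix l = true := by
  simp only [somesArePrefix, List.all_eq_true] at h ⊢
  exact fun o ho => h o ((List.dropWhile_sublist _).subset ho)

@[simp] lemma leadingStars_cons_some : leadingStars (some b :: l) = 0 := by
  simp [leadingStars]

@[simp] lemma leadingStars_cons_none : leadingStars (none :: l) = leadingStars l + 1 := by
  simp [leadingStars]

lemma leadingStars_lt_length {l : List (Option Bool)} (h : some b ∈ l) :
    leadingStars l < l.length := by
  refine lt_of_le_of_ne (List.takeWhile_prefix _).length_le fun heq => ?_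
  have := List.takeWhile_eq_self_iff.1 ((List.takeWhile_prefix _).eq_of_length heq) _ h
  simp at this

lemma compOfWord_cons_some : compOfWord (some b :: l) = (1, b) :: compOfWord l := rfl

lemma compOfWord_cons_none {l : List (Option Bool)} {p : ℕ} {s : Bool} {r : List (ℕ × Bool)}
    (h : compOfWord l = (p, s) :: r) : compOfWord (none :: l) = (p + 1, s) :: r := by
  simp [compOfWord, h]

lemma compOfWord_eq_cons : ∀ l : List (Option Bool), leadingStars l < l.length →
    ∃ s r, compOfWord l = (leadingStars l + 1, s) :: r
  | [], h => by simp at h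
  | some b :: l, _ => ⟨b, compOfWord l, by simp [compOfWord_cons_some]⟩
  | none :: l, h => by
      obtain ⟨s, r, hr⟩ := compOfWord_eq_cons l (by simpa using h)
      exact ⟨s, r, by rw [compOfWord_cons_none hr, leadingStars_cons_none]⟩

end Words

section Weight

lemma wt_cons (a : ℕ) (b : Bool) (t : List (ℕ × Bool)) (l : List (Option Bool)) :
    wt ((a, b) :: t) l =
      if somesArePrefix (l.take (a - 1))
          && ((List.range (l.take a).length).all fun j => firstSign (l.drop j) == firstSign l) then
        (-1 : ℤ) ^ (((l.take (a - 1)).filterMap id).length + (if b && firstSign l then 1 else 0))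
          * wt t (l.drop a)
      else 0 := by
  simp only [wt, List.take_take, Nat.min_eq_left (Nat.sub_le a 1)]

lemma wt_compOfWord_cons_some (b : Bool) (l m : List (Option Bool)) (s : Option Bool) :
    wt (compOfWord (some b :: l)) (s :: m)
      = (if b && firstSign (s :: m) then -1 else 1) * wt (compOfWord l) m := by
  rw [compOfWord_cons_some, wt_cons]
  split_ifs <;> simp_all

variable {l m : List (Option Bool)} {p : ℕ} {s : Bool} {r : List (ℕ × Bool)}

lemma wt_compOfWord_cons_none_some (c : Bool) (hl : compOfWord l = (p + 1, s) :: r)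
    (hm : m ≠ []) :
    wt (compOfWord (none :: l)) (some c :: m)
      = if firstSign m = c then -wt (compOfWord l) m else 0 := by
  rw [compOfWord_cons_none hl, hl, wt_cons, wt_cons]
  by_cases hc : firstSign m = c
  · subst hc
    simp only [Nat.add_sub_cancel, List.take_succ_cons, somesArePrefix_cons_some,
      List.length_cons, List.all_range_add_one, List.drop_zero, List.drop_succ_cons,
      firstSign_cons_some, beq_self_eq_true, Bool.true_and, List.filterMap_cons, id]
    split_ifs <;> simp [pow_succ]
  · rw [if_neg hc, if_neg]
    simp only [Bool.and_eq_true, List.all_eq_true, not_and, not_forall]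
    refine fun _ => ⟨1, ?_, by simpa using hc⟩
    simpa using List.length_pos_iff.mpr hm

lemma wt_compOfWord_cons_none_none (hl : compOfWord l = (p + 1, s) :: r) (hp : p < m.length) :
    wt (compOfWord (none :: l)) (none :: m)
      = if leadingStars m < p then 0 else wt (compOfWord l) m := by
  have hstars : ((m.take p).all fun o => o.isNone) = true ↔ p ≤ leadingStars m :=
    List.all_take_iff_le_length_takeWhile _ m p hp.le
  rw [compOfWord_cons_none hl, hl, wt_cons, wt_cons]
  simp only [Nat.add_sub_cancel, List.take_succ_cons, somesArePrefix_cons_none,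
    List.length_cons, List.all_range_add_one, List.drop_zero, List.drop_succ_cons,
    firstSign_cons_none, beq_self_eq_true, Bool.true_and, List.filterMap_cons, id]
  by_cases hlt : leadingStars m < p
  · rw [if_pos hlt, if_neg]
    rw [Bool.and_eq_true, hstars]
    exact fun h => absurd h.1 (not_le.2 hlt)
  · have hall := hstars.2 (not_lt.1 hlt)
    simp [hlt, hall, somesArePrefix_of_all_isNone hall]

end Weight

namespace SignedSetWord

variable {n : ℕ}

def cons (g : Option Bool) (w : SignedSetWord n) : SignedSetWord (n + 1) :=
  ⟨Fin.cons g w.1, by rw [← Fin.succ_last, Fin.cons_succ]; exact w.2⟩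

def tail (v : SignedSetWord (n + 1)) : SignedSetWord n :=
  ⟨Fin.tail v.1, by rw [Fin.tail, Fin.succ_last]; exact v.2⟩

@[simp] lemma ofFn_cons (g : Option Bool) (w : SignedSetWord n) :
    List.ofFn (cons g w).1 = g :: List.ofFn w.1 := by
  simp [cons, List.ofFn_succ]

@[simp] lemma cons_val_zero (g : Option Bool) (w : SignedSetWord n) : (cons g w).1 0 = g := by
  simp [cons]

@[simp] lemma tail_cons (g : Option Bool) (w : SignedSetWord n) : tail (cons g w) = w :=
  Subtype.ext (by simp [tail, cons])

lemma cons_tail (v : SignedSetWord (n + 1)) : cons (v.1 0) (tail v) = v :=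
  Subtype.ext (by simp [tail, cons])

def consEquiv (n : ℕ) :
    SignedSetWord n ⊕ (SignedSetWord n ⊕ SignedSetWord n) ≃ SignedSetWord (n + 1) where
  toFun := Sum.elim (cons none) (Sum.elim (cons (some false)) (cons (some true)))
  invFun v :=
    match v.1 0 with
    | none => Sum.inl (tail v)
    | some false => Sum.inr (Sum.inl (tail v))
    | some true => Sum.inr (Sum.inr (tail v))
  left_inv x := by rcases x with w | w | w <;> simp
  right_inv v := by
    conv_rhs => rw [← cons_tail v]
    rcases h : v.1 0 with _ | _ | _ <;> simp [h]

def ofBool (b : Bool) : SignedSetWord 0 := ⟨fun _ => some b, by simp⟩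

lemma ofBool_bijective : Function.Bijective ofBool := by
  refine ⟨fun b b' h => by simpa [ofBool] using congrFun (congrArg Subtype.val h) 0,
    fun w => ?_⟩
  obtain ⟨b, hb⟩ := Option.ne_none_iff_exists'.1 w.2
  exact ⟨b, Subtype.ext (funext fun i => by rw [Fin.fin_one_eq_zero i]; exact hb.symm)⟩

lemma card_eq (n : ℕ) : Fintype.card (SignedSetWord n) = 2 * 3 ^ n := by
  induction n with
  | zero => simp [← Fintype.card_of_bijective ofBool_bijective]
  | succ n ih =>
    rw [← Fintype.card_congr (consEquiv n)]
    simp only [Fintype.card_sum, ih]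
    ring

variable (b : Bool) (γ : SignedSetWord n)

lemma starRun_eq_leadingStars : starRun γ = leadingStars (List.ofFn γ.1) := rfl

@[simp] lemma starRun_cons_none : starRun (cons none γ) = starRun γ + 1 := by
  rw [starRun_eq_leadingStars, ofFn_cons, leadingStars_cons_none]; rfl

@[simp] lemma starRun_cons_some : starRun (cons (some b) γ) = 0 := by
  simp [starRun_eq_leadingStars]

lemma starRun_lt : starRun γ < n + 1 := by
  obtain ⟨b, hb⟩ := Option.ne_none_iff_exists'.1 γ.2
  have := leadingStars_lt_length b (List.mem_ofFn.2 ⟨_, hb⟩)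
  rwa [List.length_ofFn] at this

lemma compOfWord_ofFn_eq_cons :
    ∃ s r, compOfWord (List.ofFn γ.1) = (starRun γ + 1, s) :: r :=
  compOfWord_eq_cons _ (by rw [List.length_ofFn]; exact starRun_lt γ)

end SignedSetWord

open SignedSetWord

section Recursion

variable {n : ℕ} (b : Bool) (γ σ : SignedSetWord n)

lemma weightMatrix_cons_none_none :
    weightMatrix (n + 1) (cons none γ) (cons none σ) = weightMatrixHat n γ σ := by
  obtain ⟨s, r, hγ⟩ := compOfWord_ofFn_eq_cons γ
  simp only [weightMatrix, weightMatrixHat, Matrix.of_apply, ofFn_cons]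
  exact wt_compOfWord_cons_none_none hγ (by rw [List.length_ofFn]; exact starRun_lt γ)

lemma weightMatrixHat_cons_none_none :
    weightMatrixHat (n + 1) (cons none γ) (cons none σ) = weightMatrixHat n γ σ := by
  simp only [weightMatrixHat, Matrix.of_apply, weightMatrix_cons_none_none, starRun_cons_none,
    add_lt_add_iff_right]
  split_ifs <;> rfl

lemma weightMatrix_cons_none_some :
    weightMatrix (n + 1) (cons none γ) (cons (some b) σ)
      = if firstSign (List.ofFn σ.1) = b then -weightMatrix n γ σ else 0 := by
  obtain ⟨s, r, hγ⟩ := compOfWord_ofFn_eq_cons γ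
  simp only [weightMatrix, Matrix.of_apply, ofFn_cons]
  exact wt_compOfWord_cons_none_some b hγ (List.ne_nil_of_length_pos (by simp))

lemma weightMatrixHat_cons_none_some :
    weightMatrixHat (n + 1) (cons none γ) (cons (some b) σ) = 0 := by
  simp [weightMatrixHat]

lemma weightMatrix_cons_some (g : Option Bool) :
    weightMatrix (n + 1) (cons (some b) γ) (cons g σ)
      = (if b && firstSign (g :: List.ofFn σ.1) then -1 else 1) * weightMatrix n γ σ := by
  simp only [weightMatrix, Matrix.of_apply, ofFn_cons]
  exact wt_compOfWord_cons_some b _ _ g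

lemma weightMatrixHat_cons_some (τ : SignedSetWord (n + 1)) :
    weightMatrixHat (n + 1) (cons (some b) γ) τ = weightMatrix (n + 1) (cons (some b) γ) τ := by
  simp [weightMatrixHat]

end Recursion

noncomputable def firstSignProj (n : ℕ) (b : Bool) :
    Matrix (SignedSetWord n) (SignedSetWord n) ℝ :=
  Matrix.diagonal fun σ => if firstSign (List.ofFn σ.1) = b then 1 else 0

lemma isIdempotentElem_firstSignProj (n : ℕ) (b : Bool) :
    IsIdempotentElem (firstSignProj n b) := by
  rw [IsIdempotentElem, firstSignProj, Matrix.diagonal_mul_diagonal]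
  congr 1
  funext σ
  split_ifs <;> norm_num

lemma firstSignProj_false_add_true (n : ℕ) :
    firstSignProj n false + firstSignProj n true = 1 := by
  rw [firstSignProj, firstSignProj, Matrix.diagonal_add, ← Matrix.diagonal_one]
  congr 1
  funext σ
  cases firstSign (List.ofFn σ.1) <;> norm_num

noncomputable def weightPencil (n : ℕ) (a c : ℝ) : Matrix (SignedSetWord n) (SignedSetWord n) ℝ :=
  a • weightMatrixR n + c • weightMatrixHatR n

section Pencil

variable (n : ℕ) (a c : ℝ)

lemma weightPencil_succ_submatrix :
    (weightPencil (n + 1) a c).submatrix (consEquiv n) (consEquiv n)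
      = Matrix.fromBlocks ((a + c) • weightMatrixHatR n)
          (Matrix.fromCols (-(a • weightMatrixR n * firstSignProj n false))
            (-(a • weightMatrixR n * firstSignProj n true)))
          (Matrix.fromRows ((a + c) • weightMatrixR n)
            ((a + c) • weightMatrixR n * (firstSignProj n false - firstSignProj n true)))
          (Matrix.fromBlocks ((a + c) • weightMatrixR n) ((a + c) • weightMatrixR n)
            ((a + c) • weightMatrixR n) (-((a + c) • weightMatrixR n))) := by
  ext (γ | γ | γ) (σ | σ | σ) <;>
    simp only [weightPencil, consEquiv, weightMatrixR, weightMatrixHatR, Equiv.coe_fn_mk,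
      Sum.elim_inl, Sum.elim_inr, Matrix.submatrix_apply, Matrix.add_apply, Matrix.smul_apply,
      smul_eq_mul, Matrix.of_apply, Matrix.fromBlocks_apply₁₁, Matrix.fromBlocks_apply₁₂,
      Matrix.fromBlocks_apply₂₁, Matrix.fromBlocks_apply₂₂, Matrix.fromRows_apply_inl,
      Matrix.fromRows_apply_inr, Matrix.fromCols_apply_inl, Matrix.fromCols_apply_inr,
      Matrix.neg_apply, Matrix.mul_sub, Matrix.sub_apply, firstSignProj, Matrix.mul_diagonal,
      weightMatrix_cons_none_none, weightMatrixHat_cons_none_none, weightMatrix_cons_none_some,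
      weightMatrixHat_cons_none_some, weightMatrixHat_cons_some, weightMatrix_cons_some,
      firstSign_cons_none, firstSign_cons_some] <;>
    push_cast <;> cases firstSign (List.ofFn σ.1) <;> simp -failIfUnchanged <;> ring

lemma det_weightPencil_succ :
    (weightPencil (n + 1) a c).det
      = (weightPencil n a (a + c)).det
        * ((a + c) ^ Fintype.card (SignedSetWord n) * (weightMatrixR n).det)
        * ((-2 * (a + c)) ^ Fintype.card (SignedSetWord n) * (weightMatrixR n).det) := by
  rw [← Matrix.det_submatrix_equiv_self (consEquiv n), weightPencil_succ_submatrix,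
    Matrix.det_fromBlocks_of_isIdempotentElem _ _ _ _ _ (isIdempotentElem_firstSignProj n false)
      (isIdempotentElem_firstSignProj n true) (firstSignProj_false_add_true n),
    weightPencil, add_comm, smul_smul, Matrix.det_smul, Matrix.det_smul]

end Pencil

/-- The factor `m_γ` of the product formula, with `(α, 1 - α)` replaced by `(a, c)`. -/
noncomputable def partFactor {n : ℕ} (γ : SignedSetWord n) (a c : ℝ) : ℝ :=
  Real.sqrt 2 ^ (partSizes γ).length * (a * ((partSizes γ).headI : ℝ) + c)
    * (((partSizes γ).tail.prod : ℕ) : ℝ)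

section PartFactor

variable {n : ℕ} (w : SignedSetWord n) (a c : ℝ)

lemma partFactor_cons_none : partFactor (cons none w) a c = partFactor w a (a + c) := by
  obtain ⟨s, r, hw⟩ := compOfWord_ofFn_eq_cons w
  simp only [partFactor, partSizes, ofFn_cons, compOfWord_cons_none hw, hw, List.map_cons,
    List.length_cons, List.headI_cons, List.tail_cons]
  push_cast
  ring

lemma partFactor_cons_some (b : Bool) :
    partFactor (cons (some b) w) a c = Real.sqrt 2 * (a + c) * partFactor w 1 0 := by
  obtain ⟨s, r, hw⟩ := compOfWord_ofFn_eq_cons w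
  simp only [partFactor, partSizes, ofFn_cons, compOfWord_cons_some, hw, List.map_cons,
    List.length_cons, List.headI_cons, List.tail_cons, List.prod_cons]
  push_cast
  ring

lemma prod_partFactor_succ :
    ∏ γ : SignedSetWord (n + 1), partFactor γ a c
      = (∏ w : SignedSetWord n, partFactor w a (a + c))
        * ((Real.sqrt 2 * (a + c)) ^ Fintype.card (SignedSetWord n)
          * ∏ w : SignedSetWord n, partFactor w 1 0) ^ 2 := by
  rw [← (consEquiv n).prod_comp, Fintype.prod_sum_type, Fintype.prod_sum_type]
  simp only [consEquiv, Equiv.coe_fn_mk, Sum.elim_inl, Sum.elim_inr, partFactor_cons_none,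
    partFactor_cons_some, Finset.prod_mul_distrib, Finset.prod_const, Finset.card_univ, mul_pow]
  ring

end PartFactor

section Base

lemma weightMatrixHatR_zero : weightMatrixHatR 0 = weightMatrixR 0 := by
  have h (w : SignedSetWord 0) : starRun w = 0 := Nat.lt_one_iff.1 (starRun_lt w)
  ext γ σ
  simp [weightMatrixHatR, weightMatrixR, weightMatrixHat, h]

lemma weightMatrixR_ofBool (b b' : Bool) :
    weightMatrixR 0 (ofBool b) (ofBool b') = if b && b' then -1 else 1 := by
  change ((wt (compOfWord [some b]) [some b'] : ℤ) : ℝ) = _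
  rw [wt_compOfWord_cons_some b [] [] (some b')]
  cases b <;> cases b' <;> simp [wt, compOfWord]

lemma det_weightPencil_zero (a c : ℝ) : (weightPencil 0 a c).det = -2 * (a + c) ^ 2 := by
  rw [weightPencil, weightMatrixHatR_zero, ← add_smul, Matrix.det_smul, card_eq,
    ← Matrix.det_submatrix_equiv_self (finTwoEquiv.trans (Equiv.ofBijective _ ofBool_bijective)),
    Matrix.det_fin_two]
  simp [weightMatrixR_ofBool, finTwoEquiv]
  ring

lemma partFactor_ofBool (b : Bool) (a c : ℝ) :
    partFactor (ofBool b) a c = Real.sqrt 2 * (a + c) := by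
  simp [partFactor, partSizes, ofBool, compOfWord]

end Base

theorem det_weightPencil (n : ℕ) (a c : ℝ) :
    (weightPencil n a c).det = -∏ γ : SignedSetWord n, partFactor γ a c := by
  induction n generalizing a c with
  | zero =>
    rw [det_weightPencil_zero, ← (Equiv.ofBijective _ ofBool_bijective).prod_comp,
      Fintype.prod_bool]
    simp only [Equiv.ofBijective_apply, partFactor_ofBool]
    linear_combination (a + c) ^ 2 * Real.mul_self_sqrt (zero_le_two : (0 : ℝ) ≤ 2)
  | succ n ih =>
    set N := Fintype.card (SignedSetWord n)
    have hdetA : (weightMatrixR n).det = -∏ w : SignedSetWord n, partFactor w 1 0 := by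
      simpa [weightPencil] using ih 1 0
    have hN : Even N := ⟨3 ^ n, (card_eq n).trans (two_mul _)⟩
    have hscalar : (a + c) ^ N * (-2 * (a + c)) ^ N = ((Real.sqrt 2 * (a + c)) ^ N) ^ 2 :=
      calc (a + c) ^ N * (-2 * (a + c)) ^ N = (-(2 * (a + c) ^ 2)) ^ N := by
            rw [← mul_pow]; congr 1; ring
        _ = ((Real.sqrt 2 * (a + c)) ^ 2) ^ N := by
            rw [hN.neg_pow, mul_pow (Real.sqrt 2), Real.sq_sqrt zero_le_two]
        _ = ((Real.sqrt 2 * (a + c)) ^ N) ^ 2 := by rw [← pow_mul, ← pow_mul, mul_comm N]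
    rw [det_weightPencil_succ, ih, hdetA, prod_partFactor_succ]
    linear_combination (-(∏ w : SignedSetWord n, partFactor w a (a + c))
      * (∏ w : SignedSetWord n, partFactor w 1 0) ^ 2) * hscalar

/-- For every real `α` and every positive integer `n` (here `A_n = weightMatrix (n-1)`,
i.e. `weightMatrix m = A_{m+1}`),
`det(αA_n + (1−α)Â_n) = − Π_{γ ∈ Comp^B(n)} m_γ(α)`, where for a signed composition
`γ` with part sizes `γ₁, ..., γ_k`,
`m_γ(α) = 2^{k/2} · (αγ₁ + (1−α)) · Π_{i=2}^{k} γ_i`. -/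
theorem weightMatrix_det_alpha (α : ℝ) (n : ℕ) :
    (α • weightMatrixR n + (1 - α) • weightMatrixHatR n).det
      = - ∏ γ : SignedSetWord n,
          (Real.sqrt 2) ^ (partSizes γ).length
            * (α * ((partSizes γ).headI : ℝ) + (1 - α))
            * (((partSizes γ).tail.prod : ℕ) : ℝ) :=
  det_weightPencil n α (1 - α)
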